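/- arXiv:1806.05206 — 2 statements merged into one kernel-verified Lean document; each statement's English description precedes it below -/
import Mathlib

section
/- (a) If λ₀ < E < λ₁, then for every x ∈ F₊ \ {0} one has Q(E,x) ≥ (λ₁−E)·‖x‖² > 0. (b) If E > λ₁, then for every ε with 0 < ε < E−λ₁ there exists x ∈ F₊ \ {0} such that φ_{E,x}(y) ≤ −ε‖x‖² for all y ∈ F₋; in particular Q(E,x) ≤ −ε‖x‖² < 0. -/
local notation "⟪" x ", " y "⟫" => @inner ℂ _ _ x y

/-!
Since `F₊ ⊥ F₋`, `‖x + y‖² = ‖x‖² + ‖y‖²` for `x ∈ F₊`, `y ∈ F₋`. Hence a bound `μ ‖x + y‖²` on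
the quadratic form gives the bound `(μ - E) ‖x‖²` on `φ_{E,x}(y)`: from below when `μ ≥ E`, from
above when `μ ≤ E`, and the characterisation of `λ₁` supplies such `μ` arbitrarily close to `λ₁`.
For `E > λ₀` the function `φ_{E,x}` is bounded above (complete the square in `‖y‖`), so `Q(E,x)` is
a genuine supremum.
-/

section

open RCLike Filter Topology

variable {𝕜 H : Type*} [RCLike 𝕜] [NormedAddCommGroup H] [InnerProductSpace 𝕜 H]

lemma inner_eq_zero_of_apply_eq_self_of_apply_eq_zero {P : H →L[𝕜] H}
    (hP : ∀ u v : H, inner 𝕜 (P u) v = inner 𝕜 u (P v)) {x y : H} (hx : P x = x) (hy : P y = 0) :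
    inner 𝕜 x y = 0 := by
  rw [← hx, hP, hy, inner_zero_right]

lemma norm_add_sq_eq_of_apply_eq_self_of_apply_eq_zero {P : H →L[𝕜] H}
    (hP : ∀ u v : H, inner 𝕜 (P u) v = inner 𝕜 u (P v)) {x y : H} (hx : P x = x) (hy : P y = 0) :
    ‖x + y‖ ^ 2 = ‖x‖ ^ 2 + ‖y‖ ^ 2 := by
  simp only [sq, norm_add_sq_eq_norm_sq_add_norm_sq_of_inner_eq_zero x y
    (inner_eq_zero_of_apply_eq_self_of_apply_eq_zero hP hx hy)]

lemma two_mul_mul_sub_mul_sq_le_sq_div {a t c : ℝ} (hc : 0 < c) :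
    2 * (a * t) - c * t ^ 2 ≤ a ^ 2 / c := by
  rw [le_div_iff₀ hc]
  nlinarith [sq_nonneg (a - c * t)]

lemma LinearPMap.re_inner_map_add_of_symm {A : H →ₗ.[𝕜] H}
    (hA : ∀ x y : A.domain, inner 𝕜 (A x) (y : H) = inner 𝕜 (x : H) (A y)) (x y : A.domain) :
    re (inner 𝕜 ((x : H) + y) (A (x + y))) =
      re (inner 𝕜 (x : H) (A x)) + 2 * re (inner 𝕜 (A x) (y : H)) + re (inner 𝕜 (y : H) (A y)) := by
  rw [A.map_add, inner_add_left, inner_add_right, inner_add_right, ← hA x y]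
  simp only [_root_.map_add]
  rw [inner_re_symm (𝕜 := 𝕜) (y : H) (A x)]
  ring

variable {A : H →ₗ.[𝕜] H} {P : H →L[𝕜] H}

/-- `φ_{E,x}(y)`. -/
def schurForm (A : H →ₗ.[𝕜] H) (E : ℝ) (x y : A.domain) : ℝ :=
  re (inner 𝕜 ((x : H) + y) (A (x + y))) - E * ‖(x : H) + y‖ ^ 2

/-- `Q(E,x)` is the supremum of this set. -/
def schurFormValues (A : H →ₗ.[𝕜] H) (P : H →L[𝕜] H) (E : ℝ) (x : A.domain) : Set ℝ :=
  {r | ∃ y : A.domain, P y = 0 ∧ r = schurForm A E x y}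

lemma schurFormValues_nonempty (E : ℝ) (x : A.domain) : (schurFormValues A P E x).Nonempty :=
  ⟨_, 0, by simp, rfl⟩

lemma bddAbove_schurFormValues (hP : ∀ u v : H, inner 𝕜 (P u) v = inner 𝕜 u (P v))
    (hA : ∀ x y : A.domain, inner 𝕜 (A x) (y : H) = inner 𝕜 (x : H) (A y)) {lam0 E : ℝ}
    (hlam0 : ∀ y : A.domain, P y = 0 → re (inner 𝕜 (y : H) (A y)) ≤ lam0 * ‖(y : H)‖ ^ 2)
    (hE : lam0 < E) {x : A.domain} (hx : P x = x) :
    BddAbove (schurFormValues A P E x) := by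
  refine ⟨re (inner 𝕜 (x : H) (A x)) - E * ‖(x : H)‖ ^ 2 + ‖A x‖ ^ 2 / (E - lam0), ?_⟩
  rintro _ ⟨y, hy, rfl⟩
  have hcross : re (inner 𝕜 (A x) (y : H)) ≤ ‖A x‖ * ‖(y : H)‖ := re_inner_le_norm _ _
  have hsquare := two_mul_mul_sub_mul_sq_le_sq_div (a := ‖A x‖) (t := ‖(y : H)‖) (sub_pos.2 hE)
  rw [schurForm, LinearPMap.re_inner_map_add_of_symm hA,
    norm_add_sq_eq_of_apply_eq_self_of_apply_eq_zero hP hx hy]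
  nlinarith [hlam0 y hy]

lemma mul_norm_sq_le_schurForm (hP : ∀ u v : H, inner 𝕜 (P u) v = inner 𝕜 u (P v))
    {E δ : ℝ} (hδ : 0 ≤ δ) {x y : A.domain} (hx : P x = x) (hy : P y = 0)
    (h : (E + δ) * ‖(x : H) + y‖ ^ 2 ≤ re (inner 𝕜 ((x : H) + y) (A (x + y)))) :
    δ * ‖(x : H)‖ ^ 2 ≤ schurForm A E x y := by
  have := norm_add_sq_eq_of_apply_eq_self_of_apply_eq_zero hP hx hy
  rw [schurForm]
  nlinarith [sq_nonneg ‖(y : H)‖]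

lemma schurForm_le_neg_mul_norm_sq (hP : ∀ u v : H, inner 𝕜 (P u) v = inner 𝕜 u (P v))
    {E ε : ℝ} (hε : 0 ≤ ε) {x y : A.domain} (hx : P x = x) (hy : P y = 0)
    (h : re (inner 𝕜 ((x : H) + y) (A (x + y))) ≤ (E - ε) * ‖(x : H) + y‖ ^ 2) :
    schurForm A E x y ≤ -ε * ‖(x : H)‖ ^ 2 := by
  have := norm_add_sq_eq_of_apply_eq_self_of_apply_eq_zero hP hx hy
  rw [schurForm]
  nlinarith [sq_nonneg ‖(y : H)‖]

lemma sub_mul_norm_sq_le_sSup_schurFormValues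
    (hP : ∀ u v : H, inner 𝕜 (P u) v = inner 𝕜 u (P v)) {lam1 E : ℝ} (hE : E < lam1) {x : A.domain}
    (hx : P x = x) (hbdd : BddAbove (schurFormValues A P E x))
    (hlam1 : ∀ ε > 0, ∃ y : A.domain, P y = 0 ∧
      (lam1 - ε) * ‖(x : H) + y‖ ^ 2 ≤ re (inner 𝕜 ((x : H) + y) (A (x + y)))) :
    (lam1 - E) * ‖(x : H)‖ ^ 2 ≤ sSup (schurFormValues A P E x) := by
  have hlim : Tendsto (fun ε => (lam1 - E - ε) * ‖(x : H)‖ ^ 2) (𝓝[>] 0)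
      (𝓝 ((lam1 - E) * ‖(x : H)‖ ^ 2)) := by
    have : Continuous fun ε : ℝ => (lam1 - E - ε) * ‖(x : H)‖ ^ 2 := by fun_prop
    simpa using (this.tendsto 0).mono_left nhdsWithin_le_nhds
  refine le_of_tendsto hlim ?_
  filter_upwards [Ioo_mem_nhdsGT (sub_pos.2 hE)] with ε ⟨hε, hεE⟩
  obtain ⟨y, hy, hform⟩ := hlam1 ε hε
  refine (mul_norm_sq_le_schurForm hP (by linarith) hx hy ?_).trans (le_csSup hbdd ⟨y, hy, rfl⟩)
  rwa [show E + (lam1 - E - ε) = lam1 - ε by ring]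

end

theorem schur_complement_sign_general
    {H : Type*} [NormedAddCommGroup H] [InnerProductSpace ℂ H]
    (A : H →ₗ.[ℂ] H)
    (hsymm : ∀ x y : A.domain, ⟪A x, (y : H)⟫ = ⟪(x : H), A y⟫)
    (P : H →L[ℂ] H)
    (hPsa : ∀ u v : H, ⟪P u, v⟫ = ⟪u, P v⟫)
    (lam0 lam1 : ℝ)
    (hlam0 : ∀ y : A.domain, P (y : H) = 0 →
      (⟪(y : H), A y⟫).re ≤ lam0 * ‖(y : H)‖ ^ 2)
    (hlam1a : ∀ x : A.domain, P (x : H) = (x : H) → (x : H) ≠ 0 → ∀ ε > 0,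
      ∃ y : A.domain, P (y : H) = 0 ∧
        (lam1 - ε) * ‖(x : H) + (y : H)‖ ^ 2 ≤ (⟪(x : H) + (y : H), A (x + y)⟫).re)
    (hlam1b : ∀ μ : ℝ, lam1 < μ → ∃ x : A.domain, P (x : H) = (x : H) ∧ (x : H) ≠ 0 ∧
      ∀ y : A.domain, P (y : H) = 0 →
        (⟪(x : H) + (y : H), A (x + y)⟫).re ≤ μ * ‖(x : H) + (y : H)‖ ^ 2)
    (Q : ℝ → A.domain → ℝ)
    (hQ : ∀ (E : ℝ) (x : A.domain), Q E x =
      sSup {r : ℝ | ∃ y : A.domain, P (y : H) = 0 ∧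
        r = (⟪(x : H) + (y : H), A (x + y)⟫).re - E * ‖(x : H) + (y : H)‖ ^ 2}) :
    (∀ E : ℝ, lam0 < E → E < lam1 → ∀ x : A.domain,
      P (x : H) = (x : H) → (x : H) ≠ 0 →
        (lam1 - E) * ‖(x : H)‖ ^ 2 ≤ Q E x ∧ 0 < Q E x) ∧
    (∀ E : ℝ, lam1 < E → ∀ ε : ℝ, 0 < ε → ε < E - lam1 →
      ∃ x : A.domain, P (x : H) = (x : H) ∧ (x : H) ≠ 0 ∧
        (∀ y : A.domain, P (y : H) = 0 →
          (⟪(x : H) + (y : H), A (x + y)⟫).re - E * ‖(x : H) + (y : H)‖ ^ 2 ≤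
            -ε * ‖(x : H)‖ ^ 2) ∧
        Q E x ≤ -ε * ‖(x : H)‖ ^ 2 ∧ Q E x < 0) := by
  have hQ' : ∀ E x, Q E x = sSup (schurFormValues A P E x) := hQ
  refine ⟨fun E hE0 hE1 x hx hx0 => ?_, fun E hE ε hε hεE => ?_⟩
  · have hpos : 0 < (lam1 - E) * ‖(x : H)‖ ^ 2 :=
      mul_pos (sub_pos.2 hE1) (pow_pos (norm_pos_iff.2 hx0) 2)
    have hle : (lam1 - E) * ‖(x : H)‖ ^ 2 ≤ Q E x := by
      rw [hQ']
      exact sub_mul_norm_sq_le_sSup_schurFormValues hPsa hE1 hx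
        (bddAbove_schurFormValues hPsa hsymm hlam0 hE0 hx) (hlam1a x hx hx0)
    exact ⟨hle, hpos.trans_le hle⟩
  · obtain ⟨x, hx, hx0, hform⟩ := hlam1b (E - ε) (by linarith)
    have hφ : ∀ y : A.domain, P y = 0 → schurForm A E x y ≤ -ε * ‖(x : H)‖ ^ 2 :=
      fun y hy => schurForm_le_neg_mul_norm_sq hPsa hε.le hx hy (hform y hy)
    have hle : Q E x ≤ -ε * ‖(x : H)‖ ^ 2 := by
      rw [hQ']
      exact csSup_le (schurFormValues_nonempty E x) fun _ ⟨y, hy, hr⟩ => hr ▸ hφ y hy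
    have hneg : -ε * ‖(x : H)‖ ^ 2 < 0 :=
      mul_neg_of_neg_of_pos (neg_neg_of_pos hε) (pow_pos (norm_pos_iff.2 hx0) 2)
    exact ⟨x, hx, hx0, hφ, hle, hle.trans_lt hneg⟩

/-- (a) If `λ₀ < E < λ₁`, then for every `x ∈ F₊ \ {0}` one has
`Q(E,x) ≥ (λ₁−E)·‖x‖² > 0`. (b) If `E > λ₁`, then for every `0 < ε < E−λ₁` there exists
`x ∈ F₊ \ {0}` such that `φ_{E,x}(y) ≤ −ε‖x‖²` for all `y ∈ F₋`; in particular
`Q(E,x) ≤ −ε‖x‖² < 0`. Here `Q(E,x) = sup_{y∈F₋} φ_{E,x}(y)` with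
`φ_{E,x}(y) = ⟨x+y, A(x+y)⟩ − E‖x+y‖²`. -/
theorem schur_complement_sign
    {H : Type*} [NormedAddCommGroup H] [InnerProductSpace ℂ H] [CompleteSpace H]
    (A : H →ₗ.[ℂ] H)
    (hdense : Dense (A.domain : Set H))
    (hsymm : ∀ x y : A.domain, ⟪A x, (y : H)⟫ = ⟪(x : H), A y⟫)
    (P : H →L[ℂ] H)
    (hPsa : ∀ u v : H, ⟪P u, v⟫ = ⟪u, P v⟫)
    (hPidem : ∀ u : H, P (P u) = P u)
    (hPinv : ∀ x ∈ A.domain, P x ∈ A.domain)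
    (lam0 lam1 : ℝ) (hgap : lam0 < lam1)
    (hlam0 : ∀ y : A.domain, P (y : H) = 0 →
      (⟪(y : H), A y⟫).re ≤ lam0 * ‖(y : H)‖ ^ 2)
    (hlam1a : ∀ x : A.domain, P (x : H) = (x : H) → (x : H) ≠ 0 → ∀ ε > 0,
      ∃ y : A.domain, P (y : H) = 0 ∧
        (lam1 - ε) * ‖(x : H) + (y : H)‖ ^ 2 ≤ (⟪(x : H) + (y : H), A (x + y)⟫).re)
    (hlam1b : ∀ μ : ℝ, lam1 < μ → ∃ x : A.domain, P (x : H) = (x : H) ∧ (x : H) ≠ 0 ∧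
      ∀ y : A.domain, P (y : H) = 0 →
        (⟪(x : H) + (y : H), A (x + y)⟫).re ≤ μ * ‖(x : H) + (y : H)‖ ^ 2)
    (Q : ℝ → A.domain → ℝ)
    (hQ : ∀ (E : ℝ) (x : A.domain), Q E x =
      sSup {r : ℝ | ∃ y : A.domain, P (y : H) = 0 ∧
        r = (⟪(x : H) + (y : H), A (x + y)⟫).re - E * ‖(x : H) + (y : H)‖ ^ 2}) :
    (∀ E : ℝ, lam0 < E → E < lam1 → ∀ x : A.domain,
      P (x : H) = (x : H) → (x : H) ≠ 0 →
        (lam1 - E) * ‖(x : H)‖ ^ 2 ≤ Q E x ∧ 0 < Q E x) ∧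
    (∀ E : ℝ, lam1 < E → ∀ ε : ℝ, 0 < ε → ε < E - lam1 →
      ∃ x : A.domain, P (x : H) = (x : H) ∧ (x : H) ≠ 0 ∧
        (∀ y : A.domain, P (y : H) = 0 →
          (⟪(x : H) + (y : H), A (x + y)⟫).re - E * ‖(x : H) + (y : H)‖ ^ 2 ≤
            -ε * ‖(x : H)‖ ^ 2) ∧
        Q E x ≤ -ε * ‖(x : H)‖ ^ 2 ∧ Q E x < 0) :=
  schur_complement_sign_general A hsymm P hPsa lam0 lam1 hlam0 hlam1a hlam1b Q hQ
end

section
/- For every x ∈ F₊ \ {0}, the quantity E(x) := sup_{z ∈ (span(x) ⊕ F₋) \ {0}} ⟨z, Az⟩/‖z‖² is finite, satisfies E(x) ≥ λ₁, equals sup_{y∈F₋} ⟨x+y, A(x+y)⟩/‖x+y‖², and is the unique number E ∈ (λ₀, ∞) such that Q(E,x) = 0. -/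
/-!
Fix `x` and put `q y = re ⟪x + y, A (x + y)⟫`, `n y = ‖x + y‖² = ‖x‖² + ‖y‖²` for `y ∈ F₋`.
Since `A ≤ λ₀` on `F₋`, completing the square in `‖y‖` bounds `q - E n` above for every
`E > λ₀`, so `Q(E, x) = sup (q - E n)` is finite there. As a supremum of affine functions of `E`
with slopes `-n y ≤ -‖x‖²`, `Q` is strictly decreasing, and it is `≤ 0` exactly from the supremum
`E*` of the Rayleigh quotients `q / n` on. If `Q(E*) < 0`, interpolating with a bound for `Q` at
some `E₀ ∈ (λ₀, E*)` would push every quotient below a point left of `E*`; hence `Q(E*) = 0` and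
`E*` is the only zero. Finally `c • x + y = c • (x + c⁻¹ • y)` for `c ≠ 0`, while vectors of `F₋`
alone have quotient `≤ λ₀ < λ₁ ≤ E*`, so adding the direction of `x` does not change the supremum.
-/

local notation "⟪" x ", " y "⟫" => @inner ℂ _ _ x y

open Set RCLike

lemma two_mul_mul_sub_mul_sq_le {α b t : ℝ} (hα : 0 < α) : 2 * b * t - α * t ^ 2 ≤ b ^ 2 / α := by
  rw [le_div_iff₀ hα]
  nlinarith [sq_nonneg (α * t - b)]

/-- `(δ E₀ + K E₁) / (K + δ)` is the point between `E₀` and `E₁` at which the two affine bounds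
on `q - E * n` cancel. -/
lemma div_le_of_sub_mul_le_of_sub_mul_le {q n E₀ E₁ K δ : ℝ} (hn : 0 < n) (hK : 0 ≤ K)
    (hδ : 0 < δ) (h₀ : q - E₀ * n ≤ K) (h₁ : q - E₁ * n ≤ -δ) :
    q / n ≤ (δ * E₀ + K * E₁) / (K + δ) := by
  rw [div_le_div_iff₀ hn (by positivity)]
  nlinarith [mul_le_mul_of_nonneg_left h₀ hδ.le, mul_le_mul_of_nonneg_left h₁ hK]

lemma setOf_exists_and_eq_eq_range {α β : Type*} (p : α → Prop) (f : α → β) :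
    {b | ∃ a, p a ∧ b = f a} = range fun a : Subtype p => f a := by
  ext b
  constructor
  · rintro ⟨a, ha, rfl⟩
    exact ⟨⟨a, ha⟩, rfl⟩
  · rintro ⟨⟨a, ha⟩, rfl⟩
    exact ⟨a, ha, rfl⟩

lemma csSup_eq_of_subset_of_subset_union_Iic {α : Type*} [ConditionallyCompleteLattice α]
    {s t : Set α} {a : α} (hst : s ⊆ t) (hts : t ⊆ s ∪ Iic a) (hne : s.Nonempty) (hs : BddAbove s) (ha : a ≤ sSup s) :
    BddAbove t ∧ sSup t = sSup s := by
  have hub : ∀ r ∈ t, r ≤ sSup s := fun r hr =>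
    (hts hr).elim (le_csSup hs) fun h => le_trans h ha
  exact ⟨⟨_, hub⟩, le_antisymm (csSup_le (hne.mono hst) hub) (csSup_le_csSup ⟨_, hub⟩ hne hst)⟩

section LevelFunction

variable {ι : Type*} {q n : ι → ℝ}

lemma bddAbove_range_div_of_bddAbove_range_sub_mul {m E : ℝ} (hm : 0 < m)
    (hmn : ∀ i, m ≤ n i) (h : BddAbove (range fun i => q i - E * n i)) :
    BddAbove (range fun i => q i / n i) := by
  obtain ⟨K, hK⟩ := h
  refine ⟨E + max K 0 / m, ?_⟩
  rintro _ ⟨i, rfl⟩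
  have hqi : q i - E * n i ≤ K := hK ⟨i, rfl⟩
  have hK' : max K 0 ≤ max K 0 / m * n i := by
    rw [div_mul_eq_mul_div, le_div_iff₀ hm]
    exact mul_le_mul_of_nonneg_left (hmn i) (le_max_right _ _)
  rw [div_le_iff₀ (hm.trans_le (hmn i)), add_mul]
  linarith [le_max_left K 0]

lemma le_ciSup_div_of_forall_exists {l : ℝ} (hn : ∀ i, 0 < n i)
    (hR : BddAbove (range fun i => q i / n i)) (h : ∀ ε > 0, ∃ i, (l - ε) * n i ≤ q i) :
    l ≤ ⨆ i, q i / n i :=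
  le_of_forall_sub_le fun ε hε =>
    let ⟨i, hi⟩ := h ε hε
    ((le_div_iff₀ (hn i)).2 hi).trans (le_ciSup hR i)

variable [Nonempty ι]

lemma ciSup_sub_mul_le_sub_mul {m E E' : ℝ} (hmn : ∀ i, m ≤ n i)
    (hbdd : BddAbove (range fun i => q i - E * n i)) (hE : E ≤ E') :
    ⨆ i, (q i - E' * n i) ≤ (⨆ i, (q i - E * n i)) - (E' - E) * m :=
  ciSup_le fun i => by
    nlinarith [le_ciSup hbdd i, mul_le_mul_of_nonneg_left (hmn i) (sub_nonneg.2 hE)]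

lemma ciSup_sub_ciSup_div_mul_eq_zero {E₀ : ℝ} (hn : ∀ i, 0 < n i)
    (hR : BddAbove (range fun i => q i / n i)) (hE₀ : E₀ < ⨆ i, q i / n i)
    (hbdd : BddAbove (range fun i => q i - E₀ * n i)) :
    ⨆ i, (q i - (⨆ j, q j / n j) * n i) = 0 := by
  set E₁ := ⨆ j, q j / n j
  have hE₁ : ∀ i, q i - E₁ * n i ≤ 0 := fun i => by
    have := (div_le_iff₀ (hn i)).1 (le_ciSup hR i)
    linarith
  have hbdd₁ : BddAbove (range fun i => q i - E₁ * n i) := ⟨0, by rintro _ ⟨i, rfl⟩; exact hE₁ i⟩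
  refine le_antisymm (ciSup_le hE₁) (not_lt.1 fun hneg => ?_)
  set δ := -⨆ i, (q i - E₁ * n i)
  set K := max (⨆ i, (q i - E₀ * n i)) 0
  have hδ : 0 < δ := neg_pos.2 hneg
  have hK : 0 ≤ K := le_max_right _ _
  have hle : E₁ ≤ (δ * E₀ + K * E₁) / (K + δ) :=
    ciSup_le fun i => div_le_of_sub_mul_le_of_sub_mul_le (hn i) hK hδ
      ((le_ciSup hbdd i).trans (le_max_left _ _))
      ((le_ciSup hbdd₁ i).trans (neg_neg _).ge)
  rw [le_div_iff₀ (by positivity)] at hle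
  nlinarith

lemma ciSup_sub_mul_eq_zero_iff {m l E : ℝ} (hm : 0 < m) (hmn : ∀ i, m ≤ n i)
    (hbdd : ∀ E, l < E → BddAbove (range fun i => q i - E * n i))
    (hl : l < ⨆ i, q i / n i) (hE : l < E) :
    ⨆ i, (q i - E * n i) = 0 ↔ E = ⨆ i, q i / n i := by
  set E₁ := ⨆ i, q i / n i
  have hn : ∀ i, 0 < n i := fun i => hm.trans_le (hmn i)
  have hR := bddAbove_range_div_of_bddAbove_range_sub_mul hm hmn (hbdd _ (lt_add_one l))
  have hQ₁ : ⨆ i, (q i - E₁ * n i) = 0 :=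
    ciSup_sub_ciSup_div_mul_eq_zero hn hR (E₀ := (l + E₁) / 2) (by linarith)
      (hbdd _ (by linarith))
  refine ⟨fun hQ => ?_, fun h => h ▸ hQ₁⟩
  rcases lt_trichotomy E E₁ with h | h | h
  · have := ciSup_sub_mul_le_sub_mul hmn (hbdd E hE) h.le
    nlinarith
  · exact h
  · have := ciSup_sub_mul_le_sub_mul hmn (hbdd E₁ hl) h.le
    nlinarith

end LevelFunction

section RayleighQuotient

variable {𝕜 H : Type*} [RCLike 𝕜] [NormedAddCommGroup H] [InnerProductSpace 𝕜 H]

lemma norm_sq_le_norm_add_sq_of_inner_eq_zero {x y : H} (h : inner 𝕜 x y = 0) :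
    ‖x‖ ^ 2 ≤ ‖x + y‖ ^ 2 := by
  rw [norm_add_sq (𝕜 := 𝕜), h, RCLike.zero_re]
  linarith [sq_nonneg ‖y‖]

namespace LinearPMap

variable (A : H →ₗ.[𝕜] H)

noncomputable def rayleighQuotient (z : A.domain) : ℝ := re (inner 𝕜 (z : H) (A z)) / ‖(z : H)‖ ^ 2

lemma re_inner_smul_apply_smul (c : 𝕜) (z : A.domain) :
    re (inner 𝕜 ((c • z : A.domain) : H) (A (c • z))) = ‖c‖ ^ 2 * re (inner 𝕜 (z : H) (A z)) := by
  rw [A.map_smul, Submodule.coe_smul, inner_smul_left, inner_smul_right, ← mul_assoc,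
    RCLike.conj_mul, ← RCLike.ofReal_pow, RCLike.re_ofReal_mul]

lemma rayleighQuotient_smul {c : 𝕜} (hc : c ≠ 0) (z : A.domain) :
    A.rayleighQuotient (c • z) = A.rayleighQuotient z := by
  rw [rayleighQuotient, rayleighQuotient, re_inner_smul_apply_smul, Submodule.coe_smul,
    norm_smul, mul_pow, mul_div_mul_left _ _ (by positivity)]

variable {A}

lemma re_inner_add_apply_add
    (hA : ∀ x y : A.domain, inner 𝕜 (A x) (y : H) = inner 𝕜 (x : H) (A y)) (x y : A.domain) :
    re (inner 𝕜 ((x : H) + y) (A (x + y))) =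
      re (inner 𝕜 (x : H) (A x)) + 2 * re (inner 𝕜 (A x) (y : H)) + re (inner 𝕜 (y : H) (A y)) := by
  rw [A.map_add, inner_add_left, inner_add_right, inner_add_right, ← hA x y,
    ← inner_conj_symm (y : H) (A x)]
  simp only [_root_.map_add, RCLike.conj_re]
  ring

lemma re_inner_add_apply_add_sub_mul_norm_sq_le
    (hA : ∀ x y : A.domain, inner 𝕜 (A x) (y : H) = inner 𝕜 (x : H) (A y)) {x y : A.domain}
    {l E : ℝ} (hxy : inner 𝕜 (x : H) y = 0) (hy : re (inner 𝕜 (y : H) (A y)) ≤ l * ‖(y : H)‖ ^ 2)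
    (hE : l < E) :
    re (inner 𝕜 ((x : H) + y) (A (x + y))) - E * ‖(x : H) + y‖ ^ 2 ≤
      re (inner 𝕜 (x : H) (A x)) - E * ‖(x : H)‖ ^ 2 + ‖A x‖ ^ 2 / (E - l) := by
  have hcs := re_inner_le_norm (𝕜 := 𝕜) (A x) (y : H)
  have hsq := two_mul_mul_sub_mul_sq_le (b := ‖A x‖) (t := ‖(y : H)‖) (sub_pos.2 hE)
  rw [re_inner_add_apply_add hA, norm_add_sq (𝕜 := 𝕜), hxy, RCLike.zero_re]
  nlinarith

lemma rayleighQuotient_smul_add_le_or_exists (P : H →L[𝕜] H) {l : ℝ}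
    (hl : ∀ y : A.domain, P (y : H) = 0 → re (inner 𝕜 (y : H) (A y)) ≤ l * ‖(y : H)‖ ^ 2)
    (x : A.domain) {y : A.domain} (hy : P (y : H) = 0) (c : 𝕜) (hne : c • (x : H) + y ≠ 0) :
    A.rayleighQuotient (c • x + y) ≤ l ∨
      ∃ y' : A.domain, P (y' : H) = 0 ∧
        A.rayleighQuotient (c • x + y) = A.rayleighQuotient (x + y') := by
  rcases eq_or_ne c 0 with rfl | hc
  · left
    simp only [zero_smul, zero_add] at hne ⊢
    rw [rayleighQuotient, div_le_iff₀ (by positivity)]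
    exact hl y hy
  · right
    refine ⟨c⁻¹ • y, by simp [hy], ?_⟩
    rw [← rayleighQuotient_smul A hc (x + c⁻¹ • y), smul_add, smul_inv_smul₀ hc]

lemma csSup_rayleighQuotient_smul_add_eq (P : H →L[𝕜] H) {l : ℝ}
    (hl : ∀ y : A.domain, P (y : H) = 0 → re (inner 𝕜 (y : H) (A y)) ≤ l * ‖(y : H)‖ ^ 2)
    {x : A.domain} (hx : (x : H) ≠ 0) (hxy : ∀ y : A.domain, P (y : H) = 0 → inner 𝕜 (x : H) y = 0)
    (hR : BddAbove (range fun y : {y : A.domain // P (y : H) = 0} => A.rayleighQuotient (x + y)))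
    (hlR : l ≤ ⨆ y : {y : A.domain // P (y : H) = 0}, A.rayleighQuotient (x + y)) :
    let S := {r | ∃ (c : 𝕜) (y : A.domain), P (y : H) = 0 ∧ c • (x : H) + y ≠ 0 ∧
      r = A.rayleighQuotient (c • x + y)}
    BddAbove S ∧ sSup S = ⨆ y : {y : A.domain // P (y : H) = 0}, A.rayleighQuotient (x + y) := by
  have : Nonempty {y : A.domain // P (y : H) = 0} := ⟨⟨0, by simp⟩⟩
  refine csSup_eq_of_subset_of_subset_union_Iic (a := l) ?_ ?_ (range_nonempty _) hR hlR
  · rintro _ ⟨⟨y, hy⟩, rfl⟩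
    have hne : (x : H) + y ≠ 0 := fun h => by
      simpa [h, hx] using norm_sq_le_norm_add_sq_of_inner_eq_zero (hxy y hy)
    exact ⟨1, y, hy, by rwa [one_smul], by rw [one_smul]⟩
  · rintro _ ⟨c, y, hy, hne, rfl⟩
    rcases rayleighQuotient_smul_add_le_or_exists P hl x hy c hne with h | ⟨y', hy', h⟩
    · exact Or.inr h
    · exact Or.inl ⟨⟨y', hy'⟩, h.symm⟩

end LinearPMap

end RayleighQuotient

theorem unique_zero_of_schur_complement_general
    {H : Type*} [NormedAddCommGroup H] [InnerProductSpace ℂ H]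
    (A : H →ₗ.[ℂ] H)
    (hsymm : ∀ x y : A.domain, ⟪A x, (y : H)⟫ = ⟪(x : H), A y⟫)
    (P : H →L[ℂ] H)
    (hPsa : ∀ u v : H, ⟪P u, v⟫ = ⟪u, P v⟫)
    (lam0 lam1 : ℝ) (hgap : lam0 < lam1)
    (hlam0 : ∀ y : A.domain, P (y : H) = 0 →
      (⟪(y : H), A y⟫).re ≤ lam0 * ‖(y : H)‖ ^ 2)
    (hlam1a : ∀ x : A.domain, P (x : H) = (x : H) → (x : H) ≠ 0 → ∀ ε > 0,
      ∃ y : A.domain, P (y : H) = 0 ∧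
        (lam1 - ε) * ‖(x : H) + (y : H)‖ ^ 2 ≤ (⟪(x : H) + (y : H), A (x + y)⟫).re)
    (Q : ℝ → A.domain → ℝ)
    (hQ : ∀ (E : ℝ) (x : A.domain), Q E x =
      sSup {r : ℝ | ∃ y : A.domain, P (y : H) = 0 ∧
        r = (⟪(x : H) + (y : H), A (x + y)⟫).re - E * ‖(x : H) + (y : H)‖ ^ 2})
    (TE : A.domain → Set ℝ)
    (hTE : ∀ x : A.domain, TE x = {r : ℝ | ∃ (c : ℂ) (y : A.domain), P (y : H) = 0 ∧
      c • (x : H) + (y : H) ≠ 0 ∧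
      r = (⟪c • (x : H) + (y : H), A (c • x + y)⟫).re / ‖c • (x : H) + (y : H)‖ ^ 2})
    (T2 : A.domain → Set ℝ)
    (hT2 : ∀ x : A.domain, T2 x = {r : ℝ | ∃ y : A.domain, P (y : H) = 0 ∧
      r = (⟪(x : H) + (y : H), A (x + y)⟫).re / ‖(x : H) + (y : H)‖ ^ 2}) :
    ∀ x : A.domain, P (x : H) = (x : H) → (x : H) ≠ 0 →
      BddAbove (TE x) ∧
      lam1 ≤ sSup (TE x) ∧
      sSup (TE x) = sSup (T2 x) ∧
      lam0 < sSup (TE x) ∧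
      Q (sSup (TE x)) x = 0 ∧
      ∀ E : ℝ, lam0 < E → Q E x = 0 → E = sSup (TE x) := by
  intro x hPx hx
  let q : {y : A.domain // P (y : H) = 0} → ℝ := fun y => (⟪(x : H) + y, A (x + y)⟫).re
  let n : {y : A.domain // P (y : H) = 0} → ℝ := fun y => ‖(x : H) + y‖ ^ 2
  have : Nonempty {y : A.domain // P (y : H) = 0} := ⟨⟨0, by simp⟩⟩
  have horth : ∀ y : A.domain, P (y : H) = 0 → ⟪(x : H), y⟫ = 0 := fun y hy => by
    rw [← hPx, hPsa, hy, inner_zero_right]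
  have hmn : ∀ y, ‖(x : H)‖ ^ 2 ≤ n y := fun y =>
    norm_sq_le_norm_add_sq_of_inner_eq_zero (horth y y.2)
  have hm : 0 < ‖(x : H)‖ ^ 2 := by positivity
  have hbdd : ∀ E, lam0 < E → BddAbove (range fun y => q y - E * n y) := fun E hE =>
    ⟨_, forall_mem_range.2 fun y =>
      LinearPMap.re_inner_add_apply_add_sub_mul_norm_sq_le hsymm (horth y y.2) (hlam0 y y.2) hE⟩
  have hR := bddAbove_range_div_of_bddAbove_range_sub_mul hm hmn (hbdd _ (lt_add_one lam0))
  have hlam1 : lam1 ≤ ⨆ y, q y / n y :=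
    le_ciSup_div_of_forall_exists (fun y => hm.trans_le (hmn y)) hR fun ε hε =>
      let ⟨y, hy, hle⟩ := hlam1a x hPx hx ε hε
      ⟨⟨y, hy⟩, hle⟩
  have hlam0' := hgap.trans_le hlam1
  have hT2x : T2 x = range fun y => q y / n y :=
    (hT2 x).trans (setOf_exists_and_eq_eq_range _ _)
  obtain ⟨hTEbdd, hTE2⟩ : BddAbove (TE x) ∧ sSup (TE x) = sSup (T2 x) := by
    rw [hTE, hT2x]
    exact LinearPMap.csSup_rayleighQuotient_smul_add_eq P hlam0 hx horth hR hlam0'.le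
  have hQx : ∀ E, Q E x = ⨆ y, (q y - E * n y) := fun E =>
    (hQ E x).trans (congrArg sSup (setOf_exists_and_eq_eq_range _ _))
  rw [hTE2, hT2x]
  have hzero := fun E => ciSup_sub_mul_eq_zero_iff hm hmn hbdd hlam0' (E := E)
  exact ⟨hTEbdd, hlam1, rfl, hlam0', (hQx _).trans ((hzero _ hlam0').2 rfl),
    fun E hE hQE => (hzero E hE).1 ((hQx E).symm.trans hQE)⟩

/-- For every `x ∈ F₊ \ {0}`, the quantity
`E(x) = sup_{z ∈ (span(x) ⊕ F₋) \ {0}} ⟨z,Az⟩/‖z‖²` is finite (the set is bounded above),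
satisfies `E(x) ≥ λ₁`, equals `sup_{y∈F₋} ⟨x+y, A(x+y)⟩/‖x+y‖²`, and is the unique number
`E ∈ (λ₀,∞)` with `Q(E,x) = 0`, where `Q(E,x) = sup_{y∈F₋} (⟨x+y,A(x+y)⟩ − E‖x+y‖²)`. -/
theorem unique_zero_of_schur_complement
    {H : Type*} [NormedAddCommGroup H] [InnerProductSpace ℂ H] [CompleteSpace H]
    (A : H →ₗ.[ℂ] H)
    (hdense : Dense (A.domain : Set H))
    (hsymm : ∀ x y : A.domain, ⟪A x, (y : H)⟫ = ⟪(x : H), A y⟫)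
    (P : H →L[ℂ] H)
    (hPsa : ∀ u v : H, ⟪P u, v⟫ = ⟪u, P v⟫)
    (hPidem : ∀ u : H, P (P u) = P u)
    (hPinv : ∀ x ∈ A.domain, P x ∈ A.domain)
    (lam0 lam1 : ℝ) (hgap : lam0 < lam1)
    (hlam0 : ∀ y : A.domain, P (y : H) = 0 →
      (⟪(y : H), A y⟫).re ≤ lam0 * ‖(y : H)‖ ^ 2)
    (hlam1a : ∀ x : A.domain, P (x : H) = (x : H) → (x : H) ≠ 0 → ∀ ε > 0,
      ∃ y : A.domain, P (y : H) = 0 ∧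
        (lam1 - ε) * ‖(x : H) + (y : H)‖ ^ 2 ≤ (⟪(x : H) + (y : H), A (x + y)⟫).re)
    (hlam1b : ∀ μ : ℝ, lam1 < μ → ∃ x : A.domain, P (x : H) = (x : H) ∧ (x : H) ≠ 0 ∧
      ∀ y : A.domain, P (y : H) = 0 →
        (⟪(x : H) + (y : H), A (x + y)⟫).re ≤ μ * ‖(x : H) + (y : H)‖ ^ 2)
    (Q : ℝ → A.domain → ℝ)
    (hQ : ∀ (E : ℝ) (x : A.domain), Q E x =
      sSup {r : ℝ | ∃ y : A.domain, P (y : H) = 0 ∧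
        r = (⟪(x : H) + (y : H), A (x + y)⟫).re - E * ‖(x : H) + (y : H)‖ ^ 2})
    (TE : A.domain → Set ℝ)
    (hTE : ∀ x : A.domain, TE x = {r : ℝ | ∃ (c : ℂ) (y : A.domain), P (y : H) = 0 ∧
      c • (x : H) + (y : H) ≠ 0 ∧
      r = (⟪c • (x : H) + (y : H), A (c • x + y)⟫).re / ‖c • (x : H) + (y : H)‖ ^ 2})
    (T2 : A.domain → Set ℝ)
    (hT2 : ∀ x : A.domain, T2 x = {r : ℝ | ∃ y : A.domain, P (y : H) = 0 ∧
      r = (⟪(x : H) + (y : H), A (x + y)⟫).re / ‖(x : H) + (y : H)‖ ^ 2}) :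
    ∀ x : A.domain, P (x : H) = (x : H) → (x : H) ≠ 0 →
      BddAbove (TE x) ∧
      lam1 ≤ sSup (TE x) ∧
      sSup (TE x) = sSup (T2 x) ∧
      lam0 < sSup (TE x) ∧
      Q (sSup (TE x)) x = 0 ∧
      ∀ E : ℝ, lam0 < E → Q E x = 0 → E = sSup (TE x) :=
  unique_zero_of_schur_complement_general A hsymm P hPsa lam0 lam1 hgap hlam0 hlam1a Q hQ TE hTE T2
    hT2
end
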